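/- Loewner's torus inequality with defect, Eisenstein bound: area(g) − (√3/2)·sys(g)² ≥ Var(f) for any metric g = f² g₀ on T² with g₀ flat of unit area in the conformal class of g. -/

import Mathlib

/-- Euclidean norm on `ℝ × ℝ`. -/
noncomputable def eNorm (p : ℝ × ℝ) : ℝ := Real.sqrt (p.1 ^ 2 + p.2 ^ 2)

/-- Integral of a doubly periodic function over the fundamental domain
`{s v₁ + t v₂ : s, t ∈ [0,1]}` of the lattice `ℤv₁ + ℤv₂` (of unit coarea). -/
noncomputable def torusInt (F : ℝ × ℝ → ℝ) (v₁ v₂ : ℝ × ℝ) : ℝ :=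
  ∫ s in (0:ℝ)..1, ∫ t in (0:ℝ)..1, F (s • v₁ + t • v₂)

/-- Area of the torus with metric `f²(dx² + dy²)`. -/
noncomputable def torusArea (f : ℝ × ℝ → ℝ) (v₁ v₂ : ℝ × ℝ) : ℝ :=
  torusInt (fun p => (f p) ^ 2) v₁ v₂

/-- Mean of the conformal factor over the flat probability measure. -/
noncomputable def torusMean (f : ℝ × ℝ → ℝ) (v₁ v₂ : ℝ × ℝ) : ℝ :=
  torusInt f v₁ v₂

/-- Variance of the conformal factor over the flat probability measure. -/
noncomputable def torusVar (f : ℝ × ℝ → ℝ) (v₁ v₂ : ℝ × ℝ) : ℝ :=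
  torusInt (fun p => (f p - torusMean f v₁ v₂) ^ 2) v₁ v₂

/-- The systole of the torus `ℝ²/(ℤv₁ + ℤv₂)` with metric `f²(dx² + dy²)`:
the least `f`-length of a `C¹` loop which is noncontractible, i.e. lifts to a
path whose endpoints differ by a nonzero lattice vector. -/
noncomputable def torusSys (f : ℝ × ℝ → ℝ) (v₁ v₂ : ℝ × ℝ) : ℝ :=
  sInf {ℓ : ℝ | ∃ γ : ℝ → ℝ × ℝ, ContDiff ℝ 1 γ ∧
    (∃ m n : ℤ, γ 1 - γ 0 = m • v₁ + n • v₂ ∧ ¬(m = 0 ∧ n = 0)) ∧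
    ℓ = ∫ t in (0:ℝ)..1, f (γ t) * eNorm (deriv γ t)}

/-!
The systole is at most the length of each horizontal segment `t ↦ t v₁ + u v₂`, a loop
in the class of `v₁`; averaging over `u` gives `sys ≤ |v₁| · mean f`, and `|v₁|² = 1/τ₂`.
Hence `(√3/2) sys² ≤ (√3/(2τ₂)) mean² ≤ mean² = area − Var f`, where the last inequality
is `τ₂ ≥ √3/2` on the fundamental domain of the modular group.
-/

lemma intervalIntegral_intervalIntegral_swap_of_continuous {E : Type*} [NormedAddCommGroup E]
    [NormedSpace ℝ E] {F : ℝ → ℝ → E} (hF : Continuous F.uncurry) (a b c d : ℝ) :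
    ∫ x in a..b, ∫ y in c..d, F x y = ∫ y in c..d, ∫ x in a..b, F x y :=
  MeasureTheory.intervalIntegral_intervalIntegral_swap <|
    (hF.continuousOn.integrableOn_compact (isCompact_uIcc.prod isCompact_uIcc)).mono_set
      (Set.prod_mono Set.uIoc_subset_uIcc Set.uIoc_subset_uIcc)

lemma eNorm_sq (p : ℝ × ℝ) : eNorm p ^ 2 = p.1 ^ 2 + p.2 ^ 2 :=
  Real.sq_sqrt (by positivity)

lemma sqrt_three_div_two_le_of_mem_fundamentalDomain {τ₁ τ₂ : ℝ} (hτ₂ : 0 < τ₂)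
    (h₁ : 1 ≤ τ₁ ^ 2 + τ₂ ^ 2) (h₂ : |τ₁| ≤ 1 / 2) : Real.sqrt 3 / 2 ≤ τ₂ := by
  have hτ₁ : τ₁ ^ 2 ≤ 1 / 4 := by
    rw [← sq_abs]; nlinarith [abs_nonneg τ₁]
  calc Real.sqrt 3 / 2 = Real.sqrt (3 / 4) := by
        rw [Real.sqrt_div' _ (by norm_num : (0:ℝ) ≤ 4),
          show (4:ℝ) = 2 ^ 2 by norm_num, Real.sqrt_sq (by norm_num)]
    _ ≤ Real.sqrt (τ₂ ^ 2) := Real.sqrt_le_sqrt (by linarith)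
    _ = τ₂ := Real.sqrt_sq hτ₂.le

section TorusIntegral

variable {v₁ v₂ : ℝ × ℝ} {F G : ℝ × ℝ → ℝ}

lemma continuous_intervalIntegral_comp_lattice (hF : Continuous F) :
    Continuous fun s : ℝ => ∫ t in (0:ℝ)..1, F (s • v₁ + t • v₂) := by
  fun_prop

lemma torusInt_add (hF : Continuous F) (hG : Continuous G) :
    torusInt (fun p => F p + G p) v₁ v₂ = torusInt F v₁ v₂ + torusInt G v₁ v₂ := by
  unfold torusInt
  rw [← intervalIntegral.integral_add
    ((continuous_intervalIntegral_comp_lattice hF).intervalIntegrable 0 1)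
    ((continuous_intervalIntegral_comp_lattice hG).intervalIntegrable 0 1)]
  refine intervalIntegral.integral_congr fun s _ => ?_
  exact intervalIntegral.integral_add ((by fun_prop : Continuous _).intervalIntegrable 0 1)
    ((by fun_prop : Continuous _).intervalIntegrable 0 1)

lemma torusInt_const_mul (c : ℝ) (F : ℝ × ℝ → ℝ) :
    torusInt (fun p => c * F p) v₁ v₂ = c * torusInt F v₁ v₂ := by
  simp only [torusInt, intervalIntegral.integral_const_mul]

lemma torusInt_const (c : ℝ) : torusInt (fun _ => c) v₁ v₂ = c := by
  simp [torusInt]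

lemma torusVar_eq_torusArea_sub_sq {f : ℝ × ℝ → ℝ} (hf : Continuous f) :
    torusVar f v₁ v₂ = torusArea f v₁ v₂ - torusMean f v₁ v₂ ^ 2 := by
  set m := torusMean f v₁ v₂ with hm
  have hexpand : (fun p => (f p - m) ^ 2) = fun p => (f p ^ 2 + (-2 * m) * f p) + m ^ 2 := by
    funext p; ring
  rw [torusVar, ← hm, hexpand, torusInt_add (by fun_prop) continuous_const,
    torusInt_add (by fun_prop) (by fun_prop), torusInt_const_mul, torusInt_const, ← torusArea,
    ← torusMean, ← hm]
  ring

end TorusIntegral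

section Systole

variable {f : ℝ × ℝ → ℝ} {v₁ v₂ : ℝ × ℝ}

lemma integral_mul_eNorm_deriv_nonneg (hf : ∀ p, 0 ≤ f p) (γ : ℝ → ℝ × ℝ) :
    0 ≤ ∫ t in (0:ℝ)..1, f (γ t) * eNorm (deriv γ t) :=
  intervalIntegral.integral_nonneg zero_le_one fun _ _ => mul_nonneg (hf _) (Real.sqrt_nonneg _)

lemma torusSys_nonneg (hf : ∀ p, 0 ≤ f p) : 0 ≤ torusSys f v₁ v₂ :=
  Real.sInf_nonneg fun _ ⟨γ, _, _, hℓ⟩ => hℓ ▸ integral_mul_eNorm_deriv_nonneg hf γ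

lemma torusSys_le_length (hf : ∀ p, 0 ≤ f p) {γ : ℝ → ℝ × ℝ} (hγ : ContDiff ℝ 1 γ) {m n : ℤ}
    (hγ₁ : γ 1 - γ 0 = m • v₁ + n • v₂) (hmn : ¬(m = 0 ∧ n = 0)) :
    torusSys f v₁ v₂ ≤ ∫ t in (0:ℝ)..1, f (γ t) * eNorm (deriv γ t) :=
  csInf_le ⟨0, fun _ ⟨γ, _, _, hℓ⟩ => hℓ ▸ integral_mul_eNorm_deriv_nonneg hf γ⟩
    ⟨γ, hγ, ⟨m, n, hγ₁, hmn⟩, rfl⟩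

lemma torusSys_le_segment (hf : ∀ p, 0 ≤ f p) (u : ℝ) :
    torusSys f v₁ v₂ ≤ eNorm v₁ * ∫ t in (0:ℝ)..1, f (t • v₁ + u • v₂) := by
  have hderiv : ∀ t : ℝ, deriv (fun t : ℝ => t • v₁ + u • v₂) t = v₁ := fun t => by
    simpa using (((hasDerivAt_id t).smul_const v₁).add_const (u • v₂)).deriv
  calc torusSys f v₁ v₂
      ≤ ∫ t in (0:ℝ)..1, f (t • v₁ + u • v₂) * eNorm (deriv (fun t : ℝ => t • v₁ + u • v₂) t) :=
        torusSys_le_length hf (by fun_prop) (m := 1) (n := 0) (by simp) (by simp)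
    _ = eNorm v₁ * ∫ t in (0:ℝ)..1, f (t • v₁ + u • v₂) := by
        simp only [hderiv]
        rw [intervalIntegral.integral_mul_const, mul_comm]

lemma torusSys_le_eNorm_mul_torusMean (hf : Continuous f) (hf₀ : ∀ p, 0 ≤ f p) :
    torusSys f v₁ v₂ ≤ eNorm v₁ * torusMean f v₁ v₂ := by
  have hcont : Continuous fun u : ℝ => eNorm v₁ * ∫ t in (0:ℝ)..1, f (t • v₁ + u • v₂) := by
    fun_prop
  calc torusSys f v₁ v₂ = ∫ _ in (0:ℝ)..1, torusSys f v₁ v₂ := by simp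
    _ ≤ ∫ u in (0:ℝ)..1, eNorm v₁ * ∫ t in (0:ℝ)..1, f (t • v₁ + u • v₂) :=
        intervalIntegral.integral_mono_on zero_le_one intervalIntegrable_const
          (hcont.intervalIntegrable 0 1) fun u _ => torusSys_le_segment hf₀ u
    _ = eNorm v₁ * torusMean f v₁ v₂ := by
        rw [intervalIntegral.integral_const_mul,
          intervalIntegral_intervalIntegral_swap_of_continuous (by fun_prop)]
        rfl

end Systole

theorem loewner_with_defect_eisenstein_general (τ₁ τ₂ : ℝ) (hτ₂ : 0 < τ₂)
    (hfund₁ : 1 ≤ τ₁ ^ 2 + τ₂ ^ 2) (hfund₂ : |τ₁| ≤ 1 / 2)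
    (v₁ v₂ : ℝ × ℝ)
    (hv₁ : v₁ = (Real.sqrt τ₂)⁻¹ • ((1:ℝ), (0:ℝ)))
    (f : ℝ × ℝ → ℝ) (hf : Continuous f) (hpos : ∀ p, 0 < f p) :
    torusArea f v₁ v₂ - (Real.sqrt 3 / 2) * (torusSys f v₁ v₂) ^ 2 ≥
      torusVar f v₁ v₂ := by
  have hf₀ : ∀ p, 0 ≤ f p := fun p => (hpos p).le
  have hv₁_sq : eNorm v₁ ^ 2 = τ₂⁻¹ := by
    simp [hv₁, eNorm_sq, inv_pow, Real.sq_sqrt hτ₂.le]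
  have hsys_sq : torusSys f v₁ v₂ ^ 2 ≤ τ₂⁻¹ * torusMean f v₁ v₂ ^ 2 := by
    rw [← hv₁_sq, ← mul_pow]
    exact pow_le_pow_left₀ (torusSys_nonneg hf₀) (torusSys_le_eNorm_mul_torusMean hf hf₀) 2
  have hτ : Real.sqrt 3 / 2 * τ₂⁻¹ ≤ 1 := by
    rw [← div_eq_mul_inv, div_le_one hτ₂]
    exact sqrt_three_div_two_le_of_mem_fundamentalDomain hτ₂ hfund₁ hfund₂
  rw [ge_iff_le, torusVar_eq_torusArea_sub_sq hf]
  nlinarith [sq_nonneg (torusMean f v₁ v₂), Real.sqrt_nonneg 3]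

/-- Loewner's torus inequality with defect, Eisenstein bound:
`area(g) − (√3/2) · sys(g)² ≥ Var(f)`. -/
theorem loewner_with_defect_eisenstein (τ₁ τ₂ : ℝ) (hτ₂ : 0 < τ₂)
    (hfund₁ : 1 ≤ τ₁ ^ 2 + τ₂ ^ 2) (hfund₂ : |τ₁| ≤ 1 / 2)
    (v₁ v₂ : ℝ × ℝ)
    (hv₁ : v₁ = (Real.sqrt τ₂)⁻¹ • ((1:ℝ), (0:ℝ)))
    (hv₂ : v₂ = (Real.sqrt τ₂)⁻¹ • (τ₁, τ₂))
    (f : ℝ × ℝ → ℝ) (hf : Continuous f) (hpos : ∀ p, 0 < f p)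
    (hper₁ : ∀ p, f (p + v₁) = f p) (hper₂ : ∀ p, f (p + v₂) = f p) :
    torusArea f v₁ v₂ - (Real.sqrt 3 / 2) * (torusSys f v₁ v₂) ^ 2 ≥
      torusVar f v₁ v₂ :=
  loewner_with_defect_eisenstein_general τ₁ τ₂ hτ₂ hfund₁ hfund₂ v₁ v₂ hv₁ f hf hpos
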